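/- arXiv:2109.01194 — 8 statements merged into one kernel-verified Lean document; each statement's English description precedes it below -/
import Mathlib

section
/- For odd n ≥ 1, the chromatic number of the cyclic Latin square graph T_n equals n. -/
/-- The cyclic Latin square graph of order `n`. -/
def cyclicLatinSquareGraph (n : ℕ) : SimpleGraph (ZMod n × ZMod n) :=
  SimpleGraph.fromRel (fun x y => x.1 = y.1 ∨ x.2 = y.2 ∨ x.1 + x.2 = y.1 + y.2)

/-!
Every row is an `n`-clique, so `n` colours are needed. When `n` is odd, `2` is invertible
in `ZMod n`, so a cell is determined by the sum and the difference of its coordinates; hence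
colouring `(i, j)` by `i - j` gives distinct colours to two cells sharing a row, a column or
a value of `i + j`.
-/

theorem ZMod.isUnit_two_of_odd {n : ℕ} (hn : Odd n) : IsUnit (2 : ZMod n) := by
  exact_mod_cast (ZMod.isUnit_iff_coprime 2 n).mpr (Nat.coprime_two_left.mpr hn)

theorem eq_of_add_eq_of_sub_eq {R : Type*} [CommRing R] (h2 : IsUnit (2 : R)) {a b c d : R}
    (hadd : a + b = c + d) (hsub : a - b = c - d) : a = c :=
  h2.mul_left_cancel (by linear_combination hadd + hsub)

namespace cyclicLatinSquareGraph

variable {n : ℕ}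

theorem eq_of_sub_eq (h2 : IsUnit (2 : ZMod n)) {x y : ZMod n × ZMod n}
    (hxy : x.1 = y.1 ∨ x.2 = y.2 ∨ x.1 + x.2 = y.1 + y.2) (hsub : x.1 - x.2 = y.1 - y.2) :
    x = y := by
  rcases hxy with hrow | hcol | hsum
  · exact Prod.ext hrow (by linear_combination hrow - hsub)
  · exact Prod.ext (by linear_combination hcol + hsub) hcol
  · have hfst := eq_of_add_eq_of_sub_eq h2 hsum hsub
    exact Prod.ext hfst (by linear_combination hsum - hfst)

def diagonalColoring (h2 : IsUnit (2 : ZMod n)) :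
    (cyclicLatinSquareGraph n).Coloring (ZMod n) :=
  SimpleGraph.Coloring.mk (fun x => x.1 - x.2) fun {x y} ⟨hne, hxy⟩ hsub => by
    rcases hxy with hxy | hyx
    · exact hne (eq_of_sub_eq h2 hxy hsub)
    · exact hne (eq_of_sub_eq h2 hyx hsub.symm).symm

def rowEmbedding (n : ℕ) : (⊤ : SimpleGraph (ZMod n)) ↪g cyclicLatinSquareGraph n where
  toFun j := (0, j)
  inj' _ _ h := (Prod.mk.inj h).2
  map_rel_iff' := by
    simp only [cyclicLatinSquareGraph, SimpleGraph.fromRel_adj, SimpleGraph.top_adj]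
    exact fun {a b} => ⟨fun h => h.1 ∘ congrArg _,
      fun hne => ⟨hne ∘ fun h => (Prod.mk.inj h).2, Or.inl (Or.inl rfl)⟩⟩

theorem enatCard_le_chromaticNumber (n : ℕ) :
    ENat.card (ZMod n) ≤ (cyclicLatinSquareGraph n).chromaticNumber := by
  rw [← SimpleGraph.chromaticNumber_top_eq_enat_card]
  exact SimpleGraph.chromaticNumber_mono_of_hom (rowEmbedding n).toHom

end cyclicLatinSquareGraph

theorem cyclic_chromaticNumber_odd_general (n : ℕ) (hodd : Odd n) :
    (cyclicLatinSquareGraph n).chromaticNumber = n := by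
  have : NeZero n := ⟨hodd.pos.ne'⟩
  refine le_antisymm ?_ ?_
  · simpa using (cyclicLatinSquareGraph.diagonalColoring
      (ZMod.isUnit_two_of_odd hodd)).colorable.chromaticNumber_le
  · simpa using cyclicLatinSquareGraph.enatCard_le_chromaticNumber n

theorem cyclic_chromaticNumber_odd (n : ℕ) (hn : 1 ≤ n) (hodd : Odd n) :
    (cyclicLatinSquareGraph n).chromaticNumber = n :=
  cyclic_chromaticNumber_odd_general n hodd
end

section
/- For even n ≥ 2, the cyclic Latin square graph T_n admits no proper coloring with n colors; that is, its chromatic number is at least n + 1. -/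
open Finset Function SimpleGraph

def IsCompleteMapping {G : Type*} [Add G] (σ : G → G) : Prop :=
  Bijective σ ∧ Bijective fun g => g + σ g

theorem IsCompleteMapping.sum_univ_eq_zero {G : Type*} [AddCommGroup G] [Fintype G]
    {σ : G → G} (hσ : IsCompleteMapping σ) : ∑ g : G, g = 0 := by
  have hsum : ∑ g, σ g = ∑ g : G, g := hσ.1.sum_comp id
  have h : ∑ g, (g + σ g) = ∑ g, g := hσ.2.sum_comp id
  rw [sum_add_distrib, hsum] at h
  simpa using h

theorem ZMod.sum_univ_eq_sum_range (n : ℕ) [NeZero n] :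
    ∑ i : ZMod n, i = ((∑ k ∈ range n, k : ℕ) : ZMod n) := by
  rw [Nat.cast_sum]
  exact sum_nbij' val (↑) (by simp [val_lt]) (by simp) (by simp)
    (fun k hk => val_cast_of_lt (mem_range.1 hk)) (by simp)

theorem ZMod.sum_univ_ne_zero_of_even {n : ℕ} [NeZero n] (hn : Even n) :
    ∑ i : ZMod n, i ≠ 0 := by
  rw [ZMod.sum_univ_eq_sum_range, Ne, ZMod.natCast_eq_zero_iff]
  rintro ⟨k, hk⟩
  have hodd : 2 * k = n - 1 := Nat.eq_of_mul_eq_mul_left (Nat.pos_of_neZero n) <| by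
    rw [← sum_range_id_mul_two, hk]; ring
  obtain ⟨m, rfl⟩ := hn
  have := NeZero.ne (m + m)
  omega

namespace cyclicLatinSquareGraph

theorem adj_iff {n : ℕ} {x y : ZMod n × ZMod n} :
    (cyclicLatinSquareGraph n).Adj x y ↔
      x ≠ y ∧ (x.1 = y.1 ∨ x.2 = y.2 ∨ x.1 + x.2 = y.1 + y.2) := by
  simp only [cyclicLatinSquareGraph, fromRel_adj, eq_comm (a := y.1), eq_comm (a := y.2),
    eq_comm (a := y.1 + y.2), or_self]

variable {n : ℕ} [NeZero n] (C : (cyclicLatinSquareGraph n).Coloring (Fin n))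

theorem surjective_coloring_row (i : ZMod n) : Surjective fun j => C (i, j) := by
  have hinj : Injective fun j => C (i, j) :=
    C.injective_comp_of_pairwise_adj _ fun j j' hne =>
      adj_iff.2 ⟨by simpa using hne, Or.inl rfl⟩
  exact ((Fintype.bijective_iff_injective_and_card _).2 ⟨hinj, by simp⟩).2

theorem isCompleteMapping_of_coloring_eq {σ : ZMod n → ZMod n} {c : Fin n}
    (hσ : ∀ i, C (i, σ i) = c) : IsCompleteMapping σ := by
  have hnonadj (i i' : ZMod n) : ¬ (cyclicLatinSquareGraph n).Adj (i, σ i) (i', σ i') :=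
    fun hadj => C.valid hadj (by rw [hσ, hσ])
  have hbij {f : ZMod n → ZMod n} (hf : ∀ i i', i ≠ i' → f i = f i' →
      (cyclicLatinSquareGraph n).Adj (i, σ i) (i', σ i')) : Bijective f :=
    Finite.injective_iff_bijective.1 fun i i' h =>
      by_contra fun hne => hnonadj i i' (hf i i' hne h)
  refine ⟨hbij fun i i' hne h => ?_, hbij fun i i' hne h => ?_⟩ <;>
    exact adj_iff.2 ⟨by simp [hne], by simp [h]⟩

theorem exists_isCompleteMapping_of_colorable (h : (cyclicLatinSquareGraph n).Colorable n) :
    ∃ σ : ZMod n → ZMod n, IsCompleteMapping σ := by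
  obtain ⟨C⟩ := h
  choose σ hσ using fun i => surjective_coloring_row C i (C (0, 0))
  exact ⟨σ, isCompleteMapping_of_coloring_eq C hσ⟩

end cyclicLatinSquareGraph

theorem cyclic_even_not_colorable_n (n : ℕ) (hn : 2 ≤ n) (heven : Even n) :
    ¬ (cyclicLatinSquareGraph n).Colorable n ∧
      (n + 1 : ℕ∞) ≤ (cyclicLatinSquareGraph n).chromaticNumber := by
  have : NeZero n := ⟨by omega⟩
  have hnot : ¬ (cyclicLatinSquareGraph n).Colorable n := fun h =>
    have ⟨_, hσ⟩ := cyclicLatinSquareGraph.exists_isCompleteMapping_of_colorable h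
    ZMod.sum_univ_ne_zero_of_even heven hσ.sum_univ_eq_zero
  exact ⟨hnot, Order.add_one_le_of_lt (not_le.1 (mt chromaticNumber_le_iff_colorable.1 hnot))⟩
end

section
/- Let n ≥ 2 be even. Define a coloring of cells (i,j) with 1 ≤ i,j ≤ n by c(i,j) = j - i mod (n+2) if i ≤ n/2, and c(i,j) = j - i - 1 mod (n+2) if i > n/2. Then c is a proper coloring of the cyclic Latin square graph of order n with n + 2 colors: whenever distinct cells (i,j) and (a,b) satisfy i = a, or j = b, or i + j ≡ a + b (mod n), we have c(i,j) ≠ c(a,b). -/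
/-! Lift the colour of `(i, j)` to the integer `j - i - s`, where the shift `s ∈ {0, 1}` records
whether row `i` lies in the second half. Inside the square two lifts differ by less than
`2(n+2)` and two sums `i + j` by less than `2n`, so equal colours make the lifts differ by `0` or
`±(n+2)`, and equal labels make the sums differ by `0` or `±n`. In a row or a column this leaves
no room. For equal labels, adding the two relations shows that `2(j - b) - (s_i - s_a)` is even,
since `n` is; so both cells lie in the same half, where `|i - a| < n/2`, and only `(i, j) = (a, b)`
survives. -/

/-- The `(n+2)`-coloring of the order-`n` cyclic Latin square: cells `(i,j)` with
`1 ≤ i,j ≤ n`, colored `j - i (mod n+2)` in the first half of rows and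
`j - i - 1 (mod n+2)` in the second half. -/
def evenColoring (n : ℕ) (p : ℕ × ℕ) : ZMod (n + 2) :=
  if p.1 ≤ n / 2 then (p.2 : ZMod (n + 2)) - p.1 else (p.2 : ZMod (n + 2)) - p.1 - 1

theorem Int.eq_zero_or_eq_or_eq_neg_of_dvd {m x : ℤ} (hdvd : m ∣ x) (hlo : -(2 * m) < x)
    (hhi : x < 2 * m) : x = 0 ∨ x = m ∨ x = -m := by
  obtain ⟨k, rfl⟩ := hdvd
  have hm : 0 < m := by linarith
  obtain ⟨hk₁, hk₂⟩ : -2 < k ∧ k < 2 := ⟨by nlinarith, by nlinarith⟩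
  interval_cases k <;> simp

namespace evenColoring

def lift (n : ℕ) (p : ℕ × ℕ) : ℤ :=
  p.2 - p.1 - if p.1 ≤ n / 2 then 0 else 1

theorem eq_cast_lift (n : ℕ) (p : ℕ × ℕ) : evenColoring n p = (lift n p : ZMod (n + 2)) := by
  unfold evenColoring lift
  split_ifs <;> push_cast <;> ring

theorem lift_mem_Icc {n : ℕ} {p : ℕ × ℕ} (h₁ : p.1 ≤ n) (h₂ : p.2 ≤ n) :
    lift n p ∈ Set.Icc (-(n + 1 : ℤ)) n := by
  unfold lift
  constructor <;> split_ifs <;> omega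

theorem lift_sub_eq_zero_or_eq_or_eq_neg {n : ℕ} {p q : ℕ × ℕ}
    (hpq : evenColoring n p = evenColoring n q)
    (hp₁ : p.1 ≤ n) (hp₂ : p.2 ≤ n) (hq₁ : q.1 ≤ n) (hq₂ : q.2 ≤ n) :
    lift n q - lift n p = 0 ∨ lift n q - lift n p = n + 2 ∨ lift n q - lift n p = -(n + 2) := by
  rw [eq_cast_lift, eq_cast_lift, ZMod.intCast_eq_intCast_iff_dvd_sub] at hpq
  obtain ⟨hp_lo, hp_hi⟩ := lift_mem_Icc hp₁ hp₂
  obtain ⟨hq_lo, hq_hi⟩ := lift_mem_Icc hq₁ hq₂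
  push_cast at hpq
  exact Int.eq_zero_or_eq_or_eq_neg_of_dvd hpq (by omega) (by omega)

end evenColoring

theorem Nat.ModEq.intCast_sub_eq_zero_or_eq_or_eq_neg {n x y : ℕ} (h : x ≡ y [MOD n])
    (hx : 0 < x) (hx' : x ≤ 2 * n) (hy : 0 < y) (hy' : y ≤ 2 * n) :
    (y - x : ℤ) = 0 ∨ (y - x : ℤ) = n ∨ (y - x : ℤ) = -n :=
  Int.eq_zero_or_eq_or_eq_neg_of_dvd (Nat.modEq_iff_dvd.mp h) (by omega) (by omega)

open evenColoring in
theorem evenColoring_proper_general (n : ℕ) (heven : Even n)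
    (i j a b : ℕ) (hi : 1 ≤ i) (hi' : i ≤ n) (hj' : j ≤ n)
    (ha : 1 ≤ a) (ha' : a ≤ n) (hb' : b ≤ n)
    (hne : (i, j) ≠ (a, b))
    (hadj : i = a ∨ j = b ∨ (i + j) % n = (a + b) % n) :
    evenColoring n (i, j) ≠ evenColoring n (a, b) := by
  intro hcol
  rw [Ne, Prod.mk.injEq] at hne
  have hlift := lift_sub_eq_zero_or_eq_or_eq_neg hcol hi' hj' ha' hb'
  obtain ⟨m, rfl⟩ := heven
  unfold lift at hlift
  dsimp only at hlift
  rcases hadj with rfl | rfl | hlabel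
  · split_ifs at hlift <;> omega
  · split_ifs at hlift <;> omega
  · have hsum := Nat.ModEq.intCast_sub_eq_zero_or_eq_or_eq_neg hlabel (by omega) (by omega)
      (by omega) (by omega)
    have hsame_half : i ≤ (m + m) / 2 ↔ a ≤ (m + m) / 2 := by
      split_ifs at hlift <;> omega
    split_ifs at hlift <;> omega

theorem evenColoring_proper (n : ℕ) (hn : 2 ≤ n) (heven : Even n)
    (i j a b : ℕ) (hi : 1 ≤ i) (hi' : i ≤ n) (hj : 1 ≤ j) (hj' : j ≤ n)
    (ha : 1 ≤ a) (ha' : a ≤ n) (hb : 1 ≤ b) (hb' : b ≤ n)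
    (hne : (i, j) ≠ (a, b))
    (hadj : i = a ∨ j = b ∨ (i + j) % n = (a + b) % n) :
    evenColoring n (i, j) ≠ evenColoring n (a, b) :=
  evenColoring_proper_general n heven i j a b hi hi' hj' ha ha' hb' hne hadj
end

section
/- Let n ≥ 2 be even and fix a color C ∈ ZMod (n+2). Under the coloring c(i,j) = j - i mod (n+2) for 1 ≤ i ≤ n/2 (and c(i,j) = j - i - 1 mod (n+2) for n/2 < i ≤ n), all cells (i,j) with 1 ≤ i ≤ n/2, 1 ≤ j ≤ n, and c(i,j) = C have labels i + j mod n of the same parity. -/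
/-- Reducing modulo 2 is possible because `m` is even, and in `ZMod 2` subtraction is addition. -/
theorem add_mod_two_eq_of_natCast_sub_eq {m : ℕ} (hm : Even m) {i j a b : ℕ}
    (h : (j : ZMod m) - i = b - a) : (i + j) % 2 = (a + b) % 2 := by
  have hmod2 := congrArg (ZMod.castHom (even_iff_two_dvd.mp hm) (ZMod 2)) h
  simp only [map_sub, map_natCast, CharTwo.sub_eq_add] at hmod2
  rw [← ZMod.natCast_eq_natCast_iff', Nat.cast_add, Nat.cast_add, add_comm, hmod2, add_comm]

theorem firstHalf_sameColor_sameParity_general (n : ℕ) (heven : Even n)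
    (C : ZMod (n + 2)) (i j a b : ℕ)
    (hc1 : (j : ZMod (n + 2)) - i = C) (hc2 : (b : ZMod (n + 2)) - a = C) :
    (i + j) % n % 2 = (a + b) % n % 2 := by
  have htwo : 2 ∣ n := even_iff_two_dvd.mp heven
  rw [Nat.mod_mod_of_dvd _ htwo, Nat.mod_mod_of_dvd _ htwo]
  exact add_mod_two_eq_of_natCast_sub_eq (heven.add even_two) (hc1.trans hc2.symm)

theorem firstHalf_sameColor_sameParity (n : ℕ) (hn : 2 ≤ n) (heven : Even n)
    (C : ZMod (n + 2)) (i j a b : ℕ)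
    (hi : 1 ≤ i) (hi' : i ≤ n / 2) (hj : 1 ≤ j) (hj' : j ≤ n)
    (ha : 1 ≤ a) (ha' : a ≤ n / 2) (hb : 1 ≤ b) (hb' : b ≤ n)
    (hc1 : (j : ZMod (n + 2)) - i = C) (hc2 : (b : ZMod (n + 2)) - a = C) :
    (i + j) % n % 2 = (a + b) % n % 2 :=
  firstHalf_sameColor_sameParity_general n heven C i j a b hc1 hc2
end

section
/- Let n ≥ 2 be even and fix a color C ∈ ZMod (n+2). Under the coloring c(i,j) = j - i mod (n+2) for i ≤ n/2 and c(i,j) = j - i - 1 mod (n+2) for i > n/2, if a cell in the first half of rows (i ≤ n/2) and a cell in the second half (i > n/2) both have color C, then the parities of their labels i + j mod n are opposite; in particular their labels differ. -/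
/-! Reducing the colour equation `j - i = b - a - 1` modulo 2, which divides `n + 2`, gives
`i + j ≡ a + b + 1 (mod 2)`; and since `2 ∣ n`, reducing a label mod `n` keeps its parity. -/

theorem add_mod_two_ne_of_natCast_sub_eq_sub_sub_one {m : ℕ} (hm : 2 ∣ m) {i j a b : ℕ}
    (h : (j : ZMod m) - i = (b : ZMod m) - a - 1) : (i + j) % 2 ≠ (a + b) % 2 := by
  have h2 := congrArg (ZMod.castHom hm (ZMod 2)) h
  simp only [map_sub, map_one, map_natCast] at h2
  have htwo : (2 : ZMod 2) = 0 := rfl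
  have key : ((i + j : ℕ) : ZMod 2) = ((a + b + 1 : ℕ) : ZMod 2) := by
    push_cast
    linear_combination h2 + ((i : ZMod 2) - a - 1) * htwo
  rw [ZMod.natCast_eq_natCast_iff'] at key
  omega

theorem halves_sameColor_oppositeParity_general (n : ℕ) (heven : Even n)
    (C : ZMod (n + 2)) (i j a b : ℕ)
    (hc1 : (j : ZMod (n + 2)) - i = C) (hc2 : (b : ZMod (n + 2)) - a - 1 = C) :
    (i + j) % n % 2 ≠ (a + b) % n % 2 ∧ (i + j) % n ≠ (a + b) % n := by
  have hpar := add_mod_two_ne_of_natCast_sub_eq_sub_sub_one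
    (heven.add even_two).two_dvd (hc1.trans hc2.symm)
  have hlabel : (i + j) % n % 2 ≠ (a + b) % n % 2 := by
    rwa [Nat.mod_mod_of_dvd _ heven.two_dvd, Nat.mod_mod_of_dvd _ heven.two_dvd]
  exact ⟨hlabel, fun h => hlabel (congrArg (· % 2) h)⟩

theorem halves_sameColor_oppositeParity (n : ℕ) (hn : 2 ≤ n) (heven : Even n)
    (C : ZMod (n + 2)) (i j a b : ℕ)
    (hi : 1 ≤ i) (hi' : i ≤ n / 2) (hj : 1 ≤ j) (hj' : j ≤ n)
    (ha : n / 2 < a) (ha' : a ≤ n) (hb : 1 ≤ b) (hb' : b ≤ n)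
    (hc1 : (j : ZMod (n + 2)) - i = C) (hc2 : (b : ZMod (n + 2)) - a - 1 = C) :
    (i + j) % n % 2 ≠ (a + b) % n % 2 ∧ (i + j) % n ≠ (a + b) % n :=
  halves_sameColor_oppositeParity_general n heven C i j a b hc1 hc2
end

section
/- Let n ≥ 2 be even and fix a color C ∈ ZMod (n+2). Under the coloring c(i,j) = j - i mod (n+2) restricted to cells with 1 ≤ i ≤ n/2 and 1 ≤ j ≤ n, any two distinct cells of color C have distinct labels i + j mod n. -/
/-!
Write `p = i - a` and `q = j - b`. Equal colours give `n + 2 ∣ q - p` and equal labels give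
`n ∣ p + q`. Since the rows lie in the first half, `|2p| ≤ n - 2`, and `|q| < n`; these bounds
leave only the quotients `-1, 0, 1` in both divisibilities, and of the nine cases only
`p = q = 0` is consistent with them.
-/

namespace Int

theorem eq_zero_of_dvd_sub_of_dvd_add {n p q : ℤ} (hp : |2 * p| ≤ n - 2) (hq : |q| < n)
    (hsub : n + 2 ∣ q - p) (hadd : n ∣ p + q) : p = 0 ∧ q = 0 := by
  obtain ⟨hp₁, hp₂⟩ := abs_le.mp hp
  obtain ⟨hq₁, hq₂⟩ := abs_lt.mp hq
  obtain ⟨k, hk⟩ := hsub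
  obtain ⟨m, hm⟩ := hadd
  have hk₁ : -1 ≤ k := by nlinarith
  have hk₂ : k ≤ 1 := by nlinarith
  have hm₁ : -1 ≤ m := by nlinarith
  have hm₂ : m ≤ 1 := by nlinarith
  interval_cases k <;> interval_cases m <;> omega

end Int

theorem firstHalf_sameColor_distinct_labels_general (n : ℕ)
    (C : ZMod (n + 2)) (i j a b : ℕ)
    (hi : 1 ≤ i) (hi' : i ≤ n / 2) (hj : 1 ≤ j) (hj' : j ≤ n)
    (ha : 1 ≤ a) (ha' : a ≤ n / 2) (hb : 1 ≤ b) (hb' : b ≤ n)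
    (hne : (i, j) ≠ (a, b))
    (hc1 : (j : ZMod (n + 2)) - i = C) (hc2 : (b : ZMod (n + 2)) - a = C) :
    (i + j) % n ≠ (a + b) % n := by
  intro hlabel
  have hcolor : ((j - i : ℤ) : ZMod (n + 2)) = ((b - a : ℤ) : ZMod (n + 2)) := by
    push_cast
    rw [hc1, hc2]
  have hsub : (n + 2 : ℤ) ∣ (j - b : ℤ) - (i - a) := by
    have := (ZMod.intCast_eq_intCast_iff_dvd_sub _ _ _).mp hcolor
    push_cast at this
    rw [show (j - b : ℤ) - (i - a) = -((b - a) - (j - i)) by ring]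
    exact this.neg_right
  have hadd : (n : ℤ) ∣ (i - a : ℤ) + (j - b) := by
    have := Nat.modEq_iff_dvd.mp hlabel.symm
    convert this using 1
    push_cast
    ring
  obtain ⟨hia, hjb⟩ := Int.eq_zero_of_dvd_sub_of_dvd_add
    (abs_le.mpr ⟨by omega, by omega⟩) (abs_lt.mpr ⟨by omega, by omega⟩) hsub hadd
  exact hne (Prod.ext (by omega) (by omega))

theorem firstHalf_sameColor_distinct_labels (n : ℕ) (hn : 2 ≤ n) (heven : Even n)
    (C : ZMod (n + 2)) (i j a b : ℕ)
    (hi : 1 ≤ i) (hi' : i ≤ n / 2) (hj : 1 ≤ j) (hj' : j ≤ n)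
    (ha : 1 ≤ a) (ha' : a ≤ n / 2) (hb : 1 ≤ b) (hb' : b ≤ n)
    (hne : (i, j) ≠ (a, b))
    (hc1 : (j : ZMod (n + 2)) - i = C) (hc2 : (b : ZMod (n + 2)) - a = C) :
    (i + j) % n ≠ (a + b) % n :=
  firstHalf_sameColor_distinct_labels_general n C i j a b hi hi' hj hj' ha ha' hb hb' hne hc1 hc2
end

section
/- Let n ≥ 2 be even and fix a color C ∈ ZMod (n+2). Under the coloring c(i,j) = j - i - 1 mod (n+2) restricted to cells with n/2 < i ≤ n and 1 ≤ j ≤ n, any two distinct cells of color C have distinct labels i + j mod n. -/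
/-!
Writing `x = i - a` and `y = j - b`, equal colors say `n + 2 ∣ y - x` and equal labels say
`n ∣ x + y`. Since `i, a` lie in `(n/2, n]` and `j, b` in `[1, n]`, both quantities are too small
to be anything but `0` or `±` one modulus, and then `2x = (x + y) - (y - x)` is too large unless
`x = y = 0`.
-/

theorem Int.eq_neg_or_eq_zero_or_eq_of_dvd_of_abs_lt_two_mul {m d : ℤ} (hd : m ∣ d)
    (h : |d| < 2 * m) : d = -m ∨ d = 0 ∨ d = m := by
  obtain ⟨k, rfl⟩ := hd
  have hm : 0 < m := by linarith [abs_nonneg (m * k)]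
  rw [abs_mul, abs_of_pos hm] at h
  have hk : |k| < 2 := lt_of_mul_lt_mul_left (by linarith) hm.le
  obtain ⟨hk₁, hk₂⟩ := abs_lt.mp hk
  interval_cases k <;> simp

theorem Int.eq_zero_of_dvd_sub_of_dvd_add_s10 {n x y : ℤ} (hx : |2 * x| < n) (hy : |y| < n)
    (hsub : n + 2 ∣ y - x) (hadd : n ∣ x + y) : x = 0 ∧ y = 0 := by
  rw [abs_lt] at hx hy
  have hsub' := Int.eq_neg_or_eq_zero_or_eq_of_dvd_of_abs_lt_two_mul hsub (by rw [abs_lt]; omega)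
  have hadd' := Int.eq_neg_or_eq_zero_or_eq_of_dvd_of_abs_lt_two_mul hadd (by rw [abs_lt]; omega)
  omega

theorem secondHalf_sameColor_distinct_labels_general (n : ℕ)
    (C : ZMod (n + 2)) (i j a b : ℕ)
    (hi : n / 2 < i) (hi' : i ≤ n) (hj : 1 ≤ j) (hj' : j ≤ n)
    (ha : n / 2 < a) (ha' : a ≤ n) (hb : 1 ≤ b) (hb' : b ≤ n)
    (hne : (i, j) ≠ (a, b))
    (hc1 : (j : ZMod (n + 2)) - i - 1 = C) (hc2 : (b : ZMod (n + 2)) - a - 1 = C) :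
    (i + j) % n ≠ (a + b) % n := by
  intro hlabel
  have hcolor : ((n + 2 : ℕ) : ℤ) ∣ ((j : ℤ) - b) - ((i : ℤ) - a) := by
    rw [← ZMod.intCast_zmod_eq_zero_iff_dvd]
    push_cast
    linear_combination hc1 - hc2
  have hsum : (n : ℤ) ∣ ((i : ℤ) - a) + ((j : ℤ) - b) :=
    (dvd_neg.mpr (Nat.ModEq.dvd hlabel)).trans (dvd_of_eq (by push_cast; ring))
  obtain ⟨hx, hy⟩ := Int.eq_zero_of_dvd_sub_of_dvd_add_s10
    (by rw [abs_lt]; omega) (by rw [abs_lt]; omega) (by exact_mod_cast hcolor) hsum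
  exact hne (Prod.ext (by omega) (by omega))

theorem secondHalf_sameColor_distinct_labels (n : ℕ) (hn : 2 ≤ n) (heven : Even n)
    (C : ZMod (n + 2)) (i j a b : ℕ)
    (hi : n / 2 < i) (hi' : i ≤ n) (hj : 1 ≤ j) (hj' : j ≤ n)
    (ha : n / 2 < a) (ha' : a ≤ n) (hb : 1 ≤ b) (hb' : b ≤ n)
    (hne : (i, j) ≠ (a, b))
    (hc1 : (j : ZMod (n + 2)) - i - 1 = C) (hc2 : (b : ZMod (n + 2)) - a - 1 = C) :
    (i + j) % n ≠ (a + b) % n :=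
  secondHalf_sameColor_distinct_labels_general n C i j a b hi hi' hj hj' ha ha' hb hb' hne hc1 hc2
end

section
/- Let n ≥ 2 be even. In the (n+2)-coloring of the n × n cyclic Latin square graph given by c(i,j) = j - i mod (n+2) for i ≤ n/2 and c(i,j) = j - i - 1 mod (n+2) for i > n/2, each color class has size either n - 1 or n - 2; in particular the coloring is equitable (any two color classes differ in size by at most 1). -/
/-- The color class of a color `C`. -/
def colorClass (n : ℕ) (C : ZMod (n + 2)) : Finset (ℕ × ℕ) :=
  ((Finset.Icc 1 n) ×ˢ (Finset.Icc 1 n)).filter (fun p => evenColoring n p = C)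

/-!
Write the colour as `c(i, j) = j - s(i)` with `s(i) = i` for `i ≤ n/2` and `s(i) = i + 1`
otherwise. Then `(i, j) ↦ s(i) mod (n + 2)` identifies the class of `C` with the residues `x`
outside `{0, n/2 + 1}` (the residues `s` misses) such that `x + C` lies outside `{0, -1}` (the
residues of no column). Two pairs of residues are excluded; the second pair is consecutive and
the first is not, so they share at most one residue, and `n - 1` or `n - 2` residues remain.
-/

open Finset

lemma ZMod.natCast_eq_natCast_iff_of_lt {N a b : ℕ} (ha : a < N) (hb : b < N) :
    (a : ZMod N) = b ↔ a = b := by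
  rw [ZMod.natCast_eq_natCast_iff', Nat.mod_eq_of_lt ha, Nat.mod_eq_of_lt hb]

/-- On `1, …, n` this enumerates `{1, …, n + 1} \ {k + 1}` increasingly. -/
def rowShift (k i : ℕ) : ℕ := if i ≤ k then i else i + 1

lemma rowShift_strictMono (k : ℕ) : StrictMono (rowShift k) := by
  intro i j hij
  unfold rowShift
  split_ifs <;> omega

lemma rowShift_lt {n k i : ℕ} (hi : i ≤ n) : rowShift k i < n + 2 := by
  unfold rowShift
  split_ifs <;> omega

lemma evenColoring_eq_sub_rowShift (n : ℕ) (p : ℕ × ℕ) :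
    evenColoring n p = p.2 - rowShift (n / 2) p.1 := by
  unfold evenColoring rowShift
  split_ifs <;> push_cast <;> ring

lemma injOn_natCast_rowShift (n k : ℕ) :
    Set.InjOn (fun i => (rowShift k i : ZMod (n + 2))) (Icc 1 n) := by
  intro i hi j hj hij
  simp only [coe_Icc, Set.mem_Icc] at hi hj
  rw [ZMod.natCast_eq_natCast_iff_of_lt (rowShift_lt hi.2) (rowShift_lt hj.2)] at hij
  exact (rowShift_strictMono k).injective hij

lemma image_natCast_rowShift {n k : ℕ} (hk : k ≤ n) :
    (Icc 1 n).image (fun i => (rowShift k i : ZMod (n + 2))) =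
      {0, ((k + 1 : ℕ) : ZMod (n + 2))}ᶜ := by
  have hcast := fun {a b : ℕ} (ha : a < n + 2) (hb : b < n + 2) =>
    ZMod.natCast_eq_natCast_iff_of_lt ha hb
  have hsub : (Icc 1 n).image (fun i => (rowShift k i : ZMod (n + 2))) ⊆
      {0, ((k + 1 : ℕ) : ZMod (n + 2))}ᶜ := by
    intro x hx
    obtain ⟨i, hi, rfl⟩ := mem_image.1 hx
    rw [mem_Icc] at hi
    rw [mem_compl, mem_insert, mem_singleton, ← Nat.cast_zero,
      hcast (rowShift_lt hi.2) (by omega), hcast (rowShift_lt hi.2) (by omega)]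
    simp only [rowShift]
    split <;> omega
  refine eq_of_subset_of_card_le hsub ?_
  rw [card_image_of_injOn (injOn_natCast_rowShift n k), card_compl, ZMod.card, Nat.card_Icc,
    card_pair]
  · omega
  · rw [← Nat.cast_zero, Ne, hcast (by omega) (by omega)]
    omega

lemma image_natCast_Icc (n : ℕ) :
    (Icc 1 n).image (Nat.cast : ℕ → ZMod (n + 2)) = {0, -1}ᶜ := by
  have h := image_natCast_rowShift (le_refl n)
  rw [image_congr (g := Nat.cast) fun i hi => by
    simp only [rowShift, if_pos (mem_Icc.1 hi).2]] at h
  have h_last : ((n + 1 : ℕ) : ZMod (n + 2)) = -1 :=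
    eq_neg_iff_add_eq_zero.2 (by exact_mod_cast ZMod.natCast_self (n + 2))
  rw [h, h_last]

lemma card_filter_product_sub_eq {G : Type*} [AddCommGroup G] [DecidableEq G]
    (S T : Finset G) (c : G) :
    #((S ×ˢ T).filter (fun p => p.2 - p.1 = c)) = #(S.filter (fun x => x + c ∈ T)) := by
  have h : (S ×ˢ T).filter (fun p => p.2 - p.1 = c) =
      (S.filter (fun x => x + c ∈ T)).image (fun x => (x, x + c)) := by
    ext ⟨x, y⟩
    simp only [mem_filter, mem_product, mem_image, Prod.mk.injEq, sub_eq_iff_eq_add']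
    grind
  rw [h, card_image_of_injective _ fun x y hxy => congrArg Prod.fst hxy]

lemma card_colorClass_eq_card_filter (n : ℕ) (C : ZMod (n + 2)) :
    #(colorClass n C) =
      #(({0, ((n / 2 + 1 : ℕ) : ZMod (n + 2))}ᶜ : Finset _).filter
        (fun x => x + C ∈ ({0, -1} : Finset (ZMod (n + 2)))ᶜ)) := by
  set Φ : ℕ × ℕ → ZMod (n + 2) × ZMod (n + 2) :=
    Prod.map (fun i => (rowShift (n / 2) i : ZMod (n + 2))) Nat.cast with hΦ
  have hinj : Set.InjOn Φ (Icc 1 n ×ˢ Icc 1 n : Finset _) := by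
    rw [coe_product]
    refine (injOn_natCast_rowShift n _).prodMap fun i hi j hj hij => ?_
    simp only [coe_Icc, Set.mem_Icc] at hi hj
    exact (ZMod.natCast_eq_natCast_iff_of_lt (by omega) (by omega)).1 hij
  have hclass :
      colorClass n C = (Icc 1 n ×ˢ Icc 1 n).filter (fun p => (Φ p).2 - (Φ p).1 = C) := by
    simp only [colorClass, evenColoring_eq_sub_rowShift, hΦ, Prod.map_fst, Prod.map_snd]
  rw [hclass, ← card_image_of_injOn (hinj.mono (coe_subset.2 (filter_subset _ _))),
    ← filter_image (p := fun q : ZMod (n + 2) × ZMod (n + 2) => q.2 - q.1 = C), hΦ,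
    prodMap_image_product, image_natCast_rowShift (Nat.div_le_self n 2), image_natCast_Icc,
    card_filter_product_sub_eq]

lemma card_compl_pair_filter_add_mem_compl {R : Type*} [CommRing R] [Fintype R] [DecidableEq R]
    [Nontrivial R] {a b : R} (c : R) (hab : a ≠ b) (hb : b ≠ a + 1) (ha : a ≠ b + 1) :
    #(({a, b}ᶜ : Finset R).filter (fun x => x + c ∈ ({0, -1} : Finset R)ᶜ)) =
        Fintype.card R - 3 ∨
      #(({a, b}ᶜ : Finset R).filter (fun x => x + c ∈ ({0, -1} : Finset R)ᶜ)) =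
        Fintype.card R - 4 := by
  set u := -1 - c
  have hfilter : ({a, b}ᶜ : Finset R).filter (fun x => x + c ∈ ({0, -1} : Finset R)ᶜ) =
      ({a, b} ∪ {u, u + 1})ᶜ := by
    ext x
    simp only [mem_filter, mem_compl, mem_insert, mem_singleton, mem_union, u]
    grind
  have hinter : #({a, b} ∩ {u, u + 1}) ≤ 1 := by
    refine card_le_one.2 fun x hx y hy => ?_
    simp only [mem_inter, mem_insert, mem_singleton] at hx hy
    grind
  have hu : u ≠ u + 1 := by simp
  rw [hfilter, card_compl, card_union, card_pair hab, card_pair hu]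
  omega

lemma card_colorClass {n : ℕ} (hn : 2 ≤ n) (C : ZMod (n + 2)) :
    #(colorClass n C) = n - 1 ∨ #(colorClass n C) = n - 2 := by
  have hcast := fun {a b : ℕ} (ha : a < n + 2) (hb : b < n + 2) =>
    ZMod.natCast_eq_natCast_iff_of_lt ha hb
  have : Fact (1 < n + 2) := ⟨by omega⟩
  have hcount := card_compl_pair_filter_add_mem_compl C
    (a := 0) (b := ((n / 2 + 1 : ℕ) : ZMod (n + 2)))
    (by rw [← Nat.cast_zero, Ne, hcast] <;> omega)
    (by rw [zero_add, ← Nat.cast_one (R := ZMod (n + 2)), Ne, hcast] <;> omega)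
    (by rw [← Nat.cast_zero, ← Nat.cast_succ, Ne, hcast] <;> omega)
  rw [ZMod.card] at hcount
  rw [card_colorClass_eq_card_filter]
  omega

theorem evenColoring_equitable_general (n : ℕ) (hn : 2 ≤ n) :
    (∀ C : ZMod (n + 2), (colorClass n C).card = n - 1 ∨ (colorClass n C).card = n - 2) ∧
      ∀ C D : ZMod (n + 2), (colorClass n C).card ≤ (colorClass n D).card + 1 := by
  refine ⟨card_colorClass hn, fun C D => ?_⟩
  rcases card_colorClass hn C with hC | hC <;> rcases card_colorClass hn D with hD | hD <;> omega

theorem evenColoring_equitable (n : ℕ) (hn : 2 ≤ n) (heven : Even n) :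
    (∀ C : ZMod (n + 2), (colorClass n C).card = n - 1 ∨ (colorClass n C).card = n - 2) ∧
      ∀ C D : ZMod (n + 2), (colorClass n C).card ≤ (colorClass n D).card + 1 :=
  evenColoring_equitable_general n hn
end
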